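/- arXiv:1111.4405 — 3 statements merged into one kernel-verified Lean document; each statement's English description precedes it below -/
import Mathlib

section
/- Let q > 1 be a real number, r ≥ 1 an integer, c_1,…,c_r nonzero real numbers, and (a_1,b_1),…,(a_r,b_r) pairwise distinct pairs of integers with a_i ≥ 0. Then the function h : ℕ → ℝ given by h(x) = Σ_{i=1}^r c_i x^{a_i} q^{b_i x} is not identically zero on ℕ. -/
/-!
Order the terms `x^a q^{bx}` lexicographically by `(b, a)`: a lexicographically smaller term
is `o` of a larger one as `x → ∞`. Since the pairs are distinct, there is a unique dominant
index `i₀`, and `h ~ c_{i₀} x^{a_{i₀}} q^{b_{i₀} x}`, which is nonzero for `x ≥ 1`; so `h`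
cannot vanish identically.
-/

open Filter Asymptotics Finset

noncomputable def powExp (q : ℝ) (a : ℕ) (b : ℤ) (x : ℕ) : ℝ :=
  (x : ℝ) ^ a * q ^ (b * (x : ℤ))

theorem powExp_pos {q : ℝ} (hq : 0 < q) (a : ℕ) (b : ℤ) {x : ℕ} (hx : x ≠ 0) :
    0 < powExp q a b x := by
  unfold powExp; positivity

theorem isLittleO_natCast_pow_pow_atTop {a a' : ℕ} (h : a < a') :
    (fun x : ℕ => (x : ℝ) ^ a) =o[atTop] fun x : ℕ => (x : ℝ) ^ a' :=
  (isLittleO_pow_pow_atTop_of_lt h).comp_tendsto tendsto_natCast_atTop_atTop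

theorem isBigO_natCast_pow_mul_self (a : ℕ) (f : ℕ → ℝ) :
    f =O[atTop] fun x : ℕ => (x : ℝ) ^ a * f x := by
  refine IsBigO.of_bound 1 ?_
  filter_upwards [eventually_ge_atTop 1] with x hx
  rw [one_mul, norm_mul]
  exact le_mul_of_one_le_left (norm_nonneg _)
    (by simpa using one_le_pow₀ (M₀ := ℝ) (n := a) (by exact_mod_cast hx))

theorem isLittleO_powExp_of_toLex_lt {q : ℝ} (hq : 1 < q) {a a' : ℕ} {b b' : ℤ}
    (h : toLex (b, a) < toLex (b', a')) : powExp q a b =o[atTop] powExp q a' b' := by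
  have hq0 : q ≠ 0 := by positivity
  set s := q ^ (b' - b)
  -- with `s = q^(b' - b) ≥ 1`, it suffices to compare `x^a` with `x^a' s^x`
  have hsplit : powExp q a' b' = fun x : ℕ => ((x : ℝ) ^ a' * s ^ x) * q ^ (b * (x : ℤ)) := by
    ext x
    simp only [powExp, s, ← zpow_natCast, ← zpow_mul, mul_assoc, ← zpow_add₀ hq0]
    ring_nf
  have key : (fun x : ℕ => (x : ℝ) ^ a) =o[atTop] fun x : ℕ => (x : ℝ) ^ a' * s ^ x := by
    rcases Prod.Lex.lt_iff.mp h with hb | ⟨rfl, ha⟩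
    · have hs : 1 < s := one_lt_zpow₀ hq (sub_pos.mpr hb)
      exact (isLittleO_pow_const_const_pow_of_one_lt a hs).trans_isBigO
        (isBigO_natCast_pow_mul_self a' _)
    · simpa [s] using isLittleO_natCast_pow_pow_atTop ha
  rw [hsplit]
  exact key.mul_isBigO (isBigO_refl _ _)

theorem exists_forall_ne_lt_of_injective {ι α : Type*} [Finite ι] [Nonempty ι] [LinearOrder α]
    {f : ι → α} (hf : Function.Injective f) : ∃ i₀, ∀ i ≠ i₀, f i < f i₀ := by
  obtain ⟨i₀, hi₀⟩ := Finite.exists_max f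
  exact ⟨i₀, fun i hi => (hi₀ i).lt_of_ne (hf.ne hi)⟩

theorem isEquivalent_sum_of_isLittleO {α ι β : Type*} [NormedAddCommGroup β] [Fintype ι]
    [DecidableEq ι] {l : Filter α} {f : ι → α → β} {i₀ : ι}
    (h : ∀ i ≠ i₀, f i =o[l] f i₀) : (fun x => ∑ i, f i x) ~[l] f i₀ := by
  have hrest : (fun x => ∑ i, f i x) - f i₀ = fun x => ∑ i ∈ univ.erase i₀, f i x := by
    ext x
    rw [Pi.sub_apply, ← add_sum_erase univ (f · x) (mem_univ i₀), add_sub_cancel_left]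
  rw [IsEquivalent, hrest]
  exact IsLittleO.fun_sum fun i hi => h i (ne_of_mem_erase hi)

/-- The function `h(x) = ∑_i c_i x^{a_i} q^{b_i x}` with nonzero `c_i` and pairwise
distinct pairs `(a_i, b_i)` is not identically zero on `ℕ`. -/
theorem sum_powexp_not_identically_zero (q : ℝ) (hq : 1 < q) (r : ℕ) (hr : 1 ≤ r)
    (c : Fin r → ℝ) (hc : ∀ i, c i ≠ 0) (a : Fin r → ℕ) (b : Fin r → ℤ)
    (hab : Function.Injective fun i => (a i, b i)) :
    ¬ ∀ x : ℕ, ∑ i, c i * (x : ℝ) ^ (a i) * q ^ (b i * (x : ℤ)) = 0 := by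
  intro H
  have : Nonempty (Fin r) := ⟨⟨0, hr⟩⟩
  obtain ⟨i₀, hi₀⟩ := exists_forall_ne_lt_of_injective
    (toLex.injective.comp (Prod.swap_injective.comp hab))
  set f : Fin r → ℕ → ℝ := fun i => c i • powExp q (a i) (b i)
  have hequiv : (fun x => ∑ i, f i x) ~[atTop] f i₀ :=
    isEquivalent_sum_of_isLittleO fun i hi => (isLittleO_const_smul_right (hc i₀)).mpr
      ((isLittleO_powExp_of_toLex_lt hq (hi₀ i hi)).const_smul_left (c i))
  have hzero : (fun x => ∑ i, f i x) = 0 := funext fun x => by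
    simpa [f, powExp, mul_assoc] using H x
  rw [hzero] at hequiv
  obtain ⟨x, hfx, hx⟩ :=
    ((isEquivalent_zero_iff_eventually_zero.mp hequiv.symm).and (eventually_ne_atTop 0)).exists
  exact smul_ne_zero (hc i₀) (powExp_pos (by positivity) _ _ hx).ne' hfx
end

section
/- Let q > 1 be a real number and let m ≥ 1, r ≥ 1 be integers. Suppose c_1,…,c_r are nonzero real numbers, a_{ij} are nonnegative integers and b_{ij} are integers (1 ≤ i ≤ r, 1 ≤ j ≤ m), and the tuples (a_{i1},…,a_{im},b_{i1},…,b_{im}) are pairwise distinct. If the function h : ℕ^m → ℝ, h(x) = Σ_{i=1}^r c_i q^{b_{i1}x_1+⋯+b_{im}x_m} Π_{j=1}^m x_j^{a_{ij}}, is absolutely summable over ℕ^m, then b_{ij} ≤ −1 for all i, j. -/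
/-!
Fix `t ∈ ℕ^m` and let only the coordinate `x_{j₀}` vary. Grouping the summands by
`(b_{i j₀}, a_{i j₀})`, the restriction of `h` to this line is a finite combination of the functions
`n ↦ q^{b n} n^a`, and it tends to `0` because `h` is summable. These functions grow strictly
faster along the lexicographic order of `(b, a)`, and those with `b ≥ 0` do not tend to `0`, so the
coefficient of every group with `b ≥ 0` vanishes. For the group of `i₀` this coefficient is
`∑ c_i q^{∑_{j ≠ j₀} b_{ij} t_j} ∏_{j ≠ j₀} t_j^{a_{ij}}`, a combination of products of the same
functions in the other variables, with distinct exponents; these products are linearly independent,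
so `c_{i₀} = 0` whenever `b_{i₀ j₀} ≥ 0`.
-/

open Filter Asymptotics Finset Topology

lemma zpow_sum₀ {ι G₀ : Type*} [CommGroupWithZero G₀] {a : G₀} (ha : a ≠ 0) (s : Finset ι)
    (f : ι → ℤ) : a ^ (∑ i ∈ s, f i) = ∏ i ∈ s, a ^ f i := by
  induction s using Finset.cons_induction with
  | empty => simp
  | cons i s hi ih => rw [sum_cons, prod_cons, zpow_add₀ ha, ih]

lemma Finset.sum_smul_comp_eq_sum_image {ι κ R M : Type*} [DecidableEq κ] [Semiring R]
    [AddCommMonoid M] [Module R M] (s : Finset ι) (g : ι → κ) (c : ι → R) (v : κ → M) :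
    ∑ i ∈ s, c i • v (g i) = ∑ k ∈ s.image g, (∑ i ∈ s with g i = k, c i) • v k := by
  rw [← sum_fiberwise_of_maps_to fun i => mem_image_of_mem g]
  refine sum_congr rfl fun k _ => ?_
  rw [sum_smul]
  exact sum_congr rfl fun i hi => by rw [(mem_filter.1 hi).2]

theorem LinearIndependent.mul_prodMk {R K L A B : Type*} [CommRing R] {v : K → A → R}
    {w : L → B → R} (hv : LinearIndependent R v) (hw : LinearIndependent R w) :
    LinearIndependent R fun kl : K × L => fun ab : A × B => v kl.1 ab.1 * w kl.2 ab.2 := by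
  classical
  refine linearIndependent_iff''.2 fun s g hg hsum => ?_
  set s₁ := s.image Prod.fst
  set s₂ := s.image Prod.snd
  have hg₁ : ∀ k ∉ s₁, ∀ l, g (k, l) = 0 := fun k hk l =>
    hg _ fun h => hk (mem_image_of_mem Prod.fst h)
  have hg₂ : ∀ l ∉ s₂, ∀ k, g (k, l) = 0 := fun l hl k =>
    hg _ fun h => hl (mem_image_of_mem Prod.snd h)
  have hsum' : ∀ a b, ∑ k ∈ s₁, (∑ l ∈ s₂, g (k, l) * w l b) * v k a = 0 := by
    intro a b
    have hsub : s ⊆ s₁ ×ˢ s₂ := fun kl h =>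
      mem_product.2 ⟨mem_image_of_mem _ h, mem_image_of_mem _ h⟩
    rw [sum_subset hsub fun kl _ hkl => by simp [hg kl hkl], sum_product] at hsum
    have hsum_ab := congrFun hsum (a, b)
    simp only [Finset.sum_apply, Pi.smul_apply, smul_eq_mul, Pi.zero_apply] at hsum_ab
    rw [← hsum_ab]
    refine sum_congr rfl fun k _ => ?_
    rw [sum_mul]
    exact sum_congr rfl fun l _ => by ring
  have hinner : ∀ b k, ∑ l ∈ s₂, g (k, l) * w l b = 0 := fun b =>
    linearIndependent_iff''.1 hv s₁ _
      (fun k hk => sum_eq_zero fun l _ => by rw [hg₁ k hk l, zero_mul])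
      (funext fun a => by simpa [Finset.sum_apply, mul_comm] using hsum' a b)
  rintro ⟨k, l⟩
  exact linearIndependent_iff''.1 hw s₂ (fun l => g (k, l)) (fun l hl => hg₂ l hl k)
    (funext fun b => by simpa [Finset.sum_apply] using hinner b k) l

theorem LinearIndependent.finPi_prod {R K A : Type*} [CommRing R] {v : K → A → R}
    (hv : LinearIndependent R v) (m : ℕ) :
    LinearIndependent R fun k : Fin m → K => fun x : Fin m → A => ∏ j, v (k j) (x j) := by
  induction m with
  | zero =>
    exact .of_subsingleton' default fun r hr => by simpa using congrFun hr default
  | succ m ih =>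
    have h := ((hv.mul_prodMk ih).comp _ (Fin.consEquiv fun _ => K).symm.injective).map'
      (LinearMap.funLeft R R (Fin.consEquiv fun _ => A).symm)
      (LinearMap.ker_eq_bot.2 (LinearMap.funLeft_injective_of_surjective _ _ _
        (Fin.consEquiv fun _ => A).symm.surjective))
    have hfamily : (fun k : Fin (m + 1) → K => fun x : Fin (m + 1) → A => ∏ j, v (k j) (x j)) =
        (LinearMap.funLeft R R (Fin.consEquiv fun _ => A).symm) ∘
          (fun kl ab => v kl.1 ab.1 * ∏ j, v (kl.2 j) (ab.2 j)) ∘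
            (Fin.consEquiv fun _ => K).symm := by
      funext k x
      simp [Fin.prod_univ_succ, Fin.consEquiv, Fin.tail]
    exact hfamily ▸ h

lemma one_isBigO_natCast_pow (k : ℕ) :
    (fun _ => (1 : ℝ)) =O[atTop] fun n : ℕ => (n : ℝ) ^ k := by
  refine IsBigO.of_bound 1 ?_
  filter_upwards [eventually_ge_atTop 1] with n hn
  simpa using one_le_pow₀ (M₀ := ℝ) (by exact_mod_cast hn)

noncomputable def expMonomial (q : ℝ) (p : ℤ × ℕ) (n : ℕ) : ℝ := q ^ (p.1 * n) * (n : ℝ) ^ p.2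

lemma expMonomial_eq_pow_mul (q : ℝ) (p : ℤ × ℕ) (n : ℕ) :
    expMonomial q p n = (n : ℝ) ^ p.2 * (q ^ p.1) ^ n := by
  rw [expMonomial, mul_comm, zpow_mul, zpow_natCast]

section OneVariable

variable {q : ℝ}

lemma expMonomial_ne_zero (hq : q ≠ 0) (p : ℤ × ℕ) {n : ℕ} (hn : n ≠ 0) :
    expMonomial q p n ≠ 0 :=
  mul_ne_zero (zpow_ne_zero _ hq) (pow_ne_zero _ (Nat.cast_ne_zero.mpr hn))

lemma one_isBigO_expMonomial (hq : 1 ≤ q) {p : ℤ × ℕ} (hp : 0 ≤ p.1) :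
    (fun _ => (1 : ℝ)) =O[atTop] expMonomial q p := by
  refine IsBigO.of_bound 1 ?_
  filter_upwards [eventually_ge_atTop 1] with n hn
  have hexp : 1 ≤ expMonomial q p n :=
    one_le_mul_of_one_le_of_one_le (one_le_zpow₀ hq (by positivity))
      (one_le_pow₀ (by exact_mod_cast hn))
  rw [norm_one, one_mul, Real.norm_of_nonneg (zero_le_one.trans hexp)]
  exact hexp

lemma expMonomial_isLittleO (hq : 1 < q) {p p' : ℤ × ℕ} (h : toLex p < toLex p') :
    expMonomial q p =o[atTop] expMonomial q p' := by
  rcases Prod.Lex.toLex_lt_toLex.mp h with hb | ⟨hb, ha⟩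
  · simp only [funext (expMonomial_eq_pow_mul q _)]
    have hρ : ‖q ^ p.1‖ < q ^ p'.1 := by
      rw [Real.norm_of_nonneg (zpow_pos (one_pos.trans hq) _).le]
      exact zpow_lt_zpow_right₀ hq hb
    refine (isLittleO_pow_const_mul_const_pow_const_pow_of_norm_lt p.2 hρ).trans_isBigO ?_
    simpa using (one_isBigO_natCast_pow p'.2).mul (isBigO_refl (fun n => (q ^ p'.1) ^ n) atTop)
  · unfold expMonomial
    rw [← hb]
    exact (isBigO_refl _ _).mul_isLittleO
      ((isLittleO_pow_pow_atTop_of_lt ha).comp_tendsto tendsto_natCast_atTop_atTop)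

lemma expMonomial_coeff_eq_zero_of_isLittleO_leading (hq : 1 < q) {P : Finset (ℤ × ℕ)}
    {S : ℤ × ℕ → ℝ} {p₀ : ℤ × ℕ} (hp₀ : p₀ ∈ P) (hmax : ∀ p ∈ P, toLex p₀ < toLex p → S p = 0)
    (h : (∑ p ∈ P, S p • expMonomial q p) =o[atTop] expMonomial q p₀) :
    S p₀ = 0 := by
  by_contra hS
  have hrest : (∑ p ∈ P.erase p₀, S p • expMonomial q p) =o[atTop] expMonomial q p₀ := by
    refine IsLittleO.sum fun p hp => ?_
    rcases lt_trichotomy (toLex p) (toLex p₀) with hlt | heq | hgt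
    · exact (expMonomial_isLittleO hq hlt).const_mul_left _
    · exact absurd (toLex.injective heq) (ne_of_mem_erase hp)
    · rw [hmax p (mem_of_mem_erase hp) hgt, zero_smul]
      exact isLittleO_zero _ _
  have hlead : (fun n => S p₀ * expMonomial q p₀ n) =o[atTop] expMonomial q p₀ :=
    (h.sub hrest).congr_left fun n => by
      rw [← add_sum_erase P _ hp₀, Pi.add_apply, add_sub_cancel_right, Pi.smul_apply, smul_eq_mul]
  refine isLittleO_irrefl ?_ ((isLittleO_const_mul_left_iff hS).mp hlead)
  exact (eventually_ne_atTop 0).frequently.mono fun n hn =>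
    expMonomial_ne_zero (one_pos.trans hq).ne' p₀ hn

lemma expMonomial_coeff_eq_zero_of_isLittleO (hq : 1 < q) {P : Finset (ℤ × ℕ)} {S : ℤ × ℕ → ℝ}
    {T : Set (ℤ × ℕ)} (hT : ∀ p ∈ T, ∀ p', toLex p ≤ toLex p' → p' ∈ T)
    (h : ∀ p ∈ T, (∑ p ∈ P, S p • expMonomial q p) =o[atTop] expMonomial q p) :
    ∀ p ∈ P, p ∈ T → S p = 0 := by
  classical
  -- Since `T` is upward closed, the lexicographically largest `p ∈ T` with `S p ≠ 0` leads.
  by_contra! hne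
  obtain ⟨p₀, hp₀, hmax⟩ := exists_max_image (P.filter fun p => p ∈ T ∧ S p ≠ 0) toLex
    (by obtain ⟨p, hp, hpT, hSp⟩ := hne; exact ⟨p, mem_filter.2 ⟨hp, hpT, hSp⟩⟩)
  rw [mem_filter] at hp₀
  refine hp₀.2.2 (expMonomial_coeff_eq_zero_of_isLittleO_leading hq hp₀.1 (fun p hp hlt => ?_)
    (h p₀ hp₀.2.1))
  by_contra hSp
  exact (hmax p (mem_filter.2 ⟨hp, hT p₀ hp₀.2.1 p hlt.le, hSp⟩)).not_gt hlt

theorem linearIndependent_expMonomial (hq : 1 < q) : LinearIndependent ℝ (expMonomial q) :=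
  linearIndependent_iff'.2 fun s g hg p hp =>
    expMonomial_coeff_eq_zero_of_isLittleO hq (T := Set.univ) (by simp)
      (fun _ _ => hg ▸ isLittleO_zero _ _) p hp trivial

theorem expMonomial_coeff_eq_zero_of_tendsto_zero (hq : 1 < q) {P : Finset (ℤ × ℕ)} {S : ℤ × ℕ → ℝ}
    (h : Tendsto (∑ p ∈ P, S p • expMonomial q p) atTop (𝓝 0)) {p : ℤ × ℕ} (hp : p ∈ P)
    (hp₁ : 0 ≤ p.1) : S p = 0 := by
  refine expMonomial_coeff_eq_zero_of_isLittleO hq (T := {p | 0 ≤ p.1}) (fun p hp p' hle => ?_)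
    (fun p hp => ((isLittleO_one_iff ℝ).2 h).trans_isBigO (one_isBigO_expMonomial hq.le hp))
    p hp hp₁
  rcases Prod.Lex.toLex_le_toLex.mp hle with hlt | ⟨heq, -⟩
  · exact hp.trans hlt.le
  · exact hp.trans heq.le

end OneVariable

lemma zpow_sum_mul_prod_pow_eq_prod_expMonomial {ι : Type*} [Fintype ι] {q : ℝ} (hq : q ≠ 0)
    (b : ι → ℤ) (a : ι → ℕ) (x : ι → ℕ) :
    q ^ (∑ j, b j * (x j : ℤ)) * ∏ j, (x j : ℝ) ^ a j = ∏ j, expMonomial q (b j, a j) (x j) := by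
  rw [zpow_sum₀ hq, ← prod_mul_distrib]
  rfl

lemma prod_expMonomial_update {ι : Type*} [Fintype ι] [DecidableEq ι] (q : ℝ) (κ : ι → ℤ × ℕ)
    (t : ι → ℕ) (j₀ : ι) (n : ℕ) :
    ∏ j, expMonomial q (κ j) (Function.update t j₀ n j) =
      expMonomial q (κ j₀) n * ∏ j, expMonomial q (Function.update κ j₀ 0 j) (t j) := by
  rw [Fintype.prod_eq_mul_prod_compl j₀, Fintype.prod_eq_mul_prod_compl j₀ (fun j => _)]
  simp only [Function.update_self]
  rw [show expMonomial q 0 (t j₀) = 1 by simp [expMonomial], one_mul]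
  congr 1
  refine prod_congr rfl fun j hj => ?_
  rw [Function.update_of_ne (mem_compl.1 hj ∘ mem_singleton.2),
    Function.update_of_ne (mem_compl.1 hj ∘ mem_singleton.2)]

theorem sum_filter_mul_prod_expMonomial_eq_zero_of_tendsto {ι κ : Type*} [Fintype ι]
    [DecidableEq ι] {q : ℝ} (hq : 1 < q) {s : Finset κ} {c : κ → ℝ} {key : κ → ι → ℤ × ℕ}
    {t : ι → ℕ} {j₀ : ι}
    (h : Tendsto (fun n => ∑ i ∈ s, c i * ∏ j, expMonomial q (key i j) (Function.update t j₀ n j))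
      atTop (𝓝 0))
    {i₀ : κ} (hi₀ : i₀ ∈ s) (hpos : 0 ≤ (key i₀ j₀).1) :
    ∑ i ∈ s with key i j₀ = key i₀ j₀,
      c i * ∏ j, expMonomial q (Function.update (key i) j₀ 0 j) (t j) = 0 := by
  classical
  have hline : (fun n => ∑ i ∈ s, c i * ∏ j, expMonomial q (key i j) (Function.update t j₀ n j)) =
      ∑ i ∈ s, (c i * ∏ j, expMonomial q (Function.update (key i) j₀ 0 j) (t j)) •
        expMonomial q (key i j₀) := by
    funext n
    simp only [prod_expMonomial_update, Finset.sum_apply, Pi.smul_apply, smul_eq_mul]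
    exact sum_congr rfl fun i _ => by ring
  rw [hline, sum_smul_comp_eq_sum_image] at h
  exact expMonomial_coeff_eq_zero_of_tendsto_zero hq h (mem_image_of_mem _ hi₀) hpos

theorem multivariate_summable_implies_neg_general (q : ℝ) (hq : 1 < q) (m r : ℕ)
    (c : Fin r → ℝ) (hc : ∀ i, c i ≠ 0)
    (a : Fin r → Fin m → ℕ) (b : Fin r → Fin m → ℤ)
    (hab : Function.Injective fun i => (a i, b i))
    (hsum : Summable fun x : Fin m → ℕ =>
      |∑ i, c i * q ^ (∑ j, b i j * (x j : ℤ)) * ∏ j, (x j : ℝ) ^ (a i j)|) :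
    ∀ i j, b i j ≤ -1 := by
  classical
  intro i₀ j₀
  by_contra! hb
  simp_rw [mul_assoc, zpow_sum_mul_prod_pow_eq_prod_expMonomial (one_pos.trans hq).ne'] at hsum
  set key : Fin r → Fin m → ℤ × ℕ := fun i j => (b i j, a i j)
  set rest : Fin r → Fin m → ℤ × ℕ := fun i => Function.update (key i) j₀ 0
  set G := univ.filter fun i => key i j₀ = key i₀ j₀
  have hcomb : ∑ i ∈ G, c i • (fun t : Fin m → ℕ => ∏ j, expMonomial q (rest i j) (t j)) = 0 := by
    funext t
    have hlim : Tendsto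
        (fun n => ∑ i, c i * ∏ j, expMonomial q (key i j) (Function.update t j₀ n j)) atTop
        (𝓝 0) := (tendsto_zero_iff_abs_tendsto_zero _).2
      (hsum.comp_injective (Function.update_injective t j₀)).tendsto_atTop_zero
    simpa [Finset.sum_apply] using sum_filter_mul_prod_expMonomial_eq_zero_of_tendsto hq hlim
      (mem_univ i₀) (show 0 ≤ b i₀ j₀ by omega)
  have hinj : Set.InjOn rest G := fun i hi i' hi' hrest => by
    have hrecover : ∀ k, Function.update (rest k) j₀ (key k j₀) = key k := fun k => by
      simp only [rest, Function.update_idem, Function.update_eq_self]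
    have hkey : key i = key i' := by
      rw [← hrecover i, ← hrecover i', hrest, (mem_filter.1 hi).2, (mem_filter.1 hi').2]
    exact hab (Prod.ext (funext fun j => congrArg Prod.snd (congrFun hkey j))
      (funext fun j => congrArg Prod.fst (congrFun hkey j)))
  have hindep := (((linearIndependent_expMonomial hq).finPi_prod m).linearIndepOn _).comp_of_image
    hinj
  exact hc i₀ (linearIndepOn_iff'.1 hindep G c subset_rfl hcomb i₀ (mem_filter.2 ⟨mem_univ _, rfl⟩))

/-- Multivariate summability: if `h(x) = ∑_i c_i q^{∑_j b_{ij} x_j} ∏_j x_j^{a_{ij}}`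
is absolutely summable over `ℕ^m`, then `b_{ij} ≤ -1` for all `i, j`. -/
theorem multivariate_summable_implies_neg (q : ℝ) (hq : 1 < q) (m r : ℕ)
    (hm : 1 ≤ m) (hr : 1 ≤ r)
    (c : Fin r → ℝ) (hc : ∀ i, c i ≠ 0)
    (a : Fin r → Fin m → ℕ) (b : Fin r → Fin m → ℤ)
    (hab : Function.Injective fun i => (a i, b i))
    (hsum : Summable fun x : Fin m → ℕ =>
      |∑ i, c i * q ^ (∑ j, b i j * (x j : ℤ)) * ∏ j, (x j : ℝ) ^ (a i j)|) :
    ∀ i j, b i j ≤ -1 :=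
  multivariate_summable_implies_neg_general q hq m r c hc a b hab hsum
end

section
/- Let q > 1 be a real number and let a ∈ ℕ, b ∈ ℤ with b ≤ −1. Then the function g_q(a,b) := Σ_{x∈ℕ} x^a q^{bx} lies in the ring 𝔸_q = ℤ[q, q^{−1}, (1/(1 − q^{−i}))_{i≥1}] ⊆ ℝ. (E.g., for a = 0 it equals 1/(1 − q^{b}).) -/
/-!
Put `r = q ^ b`, so that `0 < r < 1`. Shifting the summation index and expanding `(x + 1) ^ a`
binomially gives `(1 - r) S_a = 0 ^ a + r ∑_{k < a} (a choose k) S_k` for `S_k = ∑ x^k r^x`.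
Since `r` and `(1 - r)⁻¹` lie in `𝔸_q`, induction on `a` puts every `S_a` in `𝔸_q`.
-/

open Finset

section PowMulGeometric

variable {𝕜 : Type*} [NormedField 𝕜] {r : 𝕜}

theorem one_sub_mul_tsum_pow_mul_geometric (hr : ‖r‖ < 1) (a : ℕ) :
    (1 - r) * ∑' n : ℕ, (n : 𝕜) ^ a * r ^ n =
      0 ^ a + ∑ k ∈ range a, (a.choose k : 𝕜) * r * ∑' n : ℕ, (n : 𝕜) ^ k * r ^ n := by
  have hsum (k : ℕ) := summable_pow_mul_geometric_of_norm_lt_one k hr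
  have hshift : ∑' n : ℕ, (n : 𝕜) ^ a * r ^ n =
      0 ^ a + ∑ k ∈ range (a + 1), (a.choose k : 𝕜) * r * ∑' n : ℕ, (n : 𝕜) ^ k * r ^ n := by
    calc ∑' n : ℕ, (n : 𝕜) ^ a * r ^ n
        = 0 ^ a + ∑' n : ℕ, ∑ k ∈ range (a + 1), (a.choose k : 𝕜) * r * ((n : 𝕜) ^ k * r ^ n) := by
          rw [(hsum a).tsum_eq_zero_add]
          congr 1
          · simp
          · refine tsum_congr fun n => ?_
            rw [Nat.cast_succ, add_pow, sum_mul, pow_succ]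
            exact sum_congr rfl fun k _ => by ring
      _ = _ := by
          rw [Summable.tsum_finsetSum fun k _ => (hsum k).mul_left _]
          exact congrArg _ (sum_congr rfl fun k _ => (hsum k).tsum_mul_left _)
  rw [sum_range_succ, Nat.choose_self] at hshift
  linear_combination hshift

theorem tsum_pow_mul_geometric_mem {S : Subring 𝕜} (hr : ‖r‖ < 1) (hrS : r ∈ S)
    (hinv : (1 - r)⁻¹ ∈ S) (a : ℕ) : ∑' n : ℕ, (n : 𝕜) ^ a * r ^ n ∈ S := by
  induction a using Nat.strong_induction_on with
  | _ a ih =>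
    have h1r : 1 - r ≠ 0 := sub_ne_zero.mpr fun h => by simp [← h] at hr
    rw [← inv_mul_cancel_left₀ h1r (∑' n : ℕ, _), one_sub_mul_tsum_pow_mul_geometric hr a]
    refine mul_mem hinv (add_mem (pow_mem (zero_mem S) a) (sum_mem fun k hk => ?_))
    exact mul_mem (mul_mem (natCast_mem S _) hrS) (ih k (mem_range.mp hk))

end PowMulGeometric

def ringAq (q : ℝ) : Subring ℝ :=
  Subring.closure ({q, q⁻¹} ∪ {y : ℝ | ∃ i : ℕ, 1 ≤ i ∧ y = (1 - q ^ (-(i : ℤ)))⁻¹})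

theorem zpow_mem_ringAq (q : ℝ) (n : ℤ) : q ^ n ∈ ringAq q := by
  obtain ⟨m, rfl | rfl⟩ := n.eq_nat_or_neg
  · exact zpow_natCast q m ▸ pow_mem (Subring.subset_closure (by simp)) m
  · rw [zpow_neg, ← inv_zpow, zpow_natCast]
    exact pow_mem (Subring.subset_closure (by simp)) m

theorem inv_one_sub_zpow_mem_ringAq (q : ℝ) {b : ℤ} (hb : b ≤ -1) :
    (1 - q ^ b)⁻¹ ∈ ringAq q :=
  Subring.subset_closure <| Or.inr
    ⟨(-b).toNat, by omega, by rw [Int.toNat_of_nonneg (by omega), neg_neg]⟩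

/-- For `b ≤ -1`, the sum `∑_{x∈ℕ} x^a q^{bx}` exists and lies in the ring
`𝔸_q = ℤ[q, q⁻¹, (1/(1-q^{-i}))_{i≥1}]`. -/
theorem sum_powexp_mem_Aq (q : ℝ) (hq : 1 < q) (a : ℕ) (b : ℤ) (hb : b ≤ -1) :
    ∃ S : ℝ, HasSum (fun x : ℕ => (x : ℝ) ^ a * q ^ (b * (x : ℤ))) S ∧
      S ∈ Subring.closure
        ({q, q⁻¹} ∪ {y : ℝ | ∃ i : ℕ, 1 ≤ i ∧ y = (1 - q ^ (-(i : ℤ)))⁻¹}) := by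
  have hr : ‖q ^ b‖ < 1 := by
    rw [Real.norm_of_nonneg (zpow_pos (by linarith) b).le]
    exact zpow_lt_one_of_neg₀ hq (by omega)
  refine ⟨_, ?_, tsum_pow_mul_geometric_mem hr (zpow_mem_ringAq q b)
    (inv_one_sub_zpow_mem_ringAq q hb) a⟩
  simp_rw [zpow_mul, zpow_natCast]
  exact (summable_pow_mul_geometric_of_norm_lt_one a hr).hasSum
end
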